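/- Let A ∈ ℝ^{n×m}, b ∈ ℝ^n, g ∈ ℝ^m, ρ ≥ 0, and define Δ̂ = (ρω/√(‖g‖²+1))·[gᵀ −1] where ω = (Ag−b)/‖Ag−b‖ if Ag ≠ b and ω is any unit-norm vector otherwise. Then ‖Δ̂‖_F = ρ and ‖(A+Δ̂_A)g − (b+Δ̂_b)‖ = ‖Ag−b‖ + ρ√(‖g‖²+1), where [Δ̂_A Δ̂_b] = Δ̂. -/

import Mathlib

/-!
The perturbed residual is `(Ag - b) + s(‖g‖² + 1) ω`, and `ω` points along `Ag - b`, so the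
triangle inequality is an equality there. The Frobenius norm of the rank-one `ω [gᵀ -1]` is
`‖ω‖ √(‖g‖² + 1)`.
-/

open Matrix BigOperators

noncomputable def vnorm {n : ℕ} (x : Fin n → ℝ) : ℝ := Real.sqrt (∑ i, x i ^ 2)

section vnorm

variable {n : ℕ}

lemma vnorm_eq_norm (x : Fin n → ℝ) : vnorm x = ‖WithLp.toLp 2 x‖ := by
  simp [vnorm, EuclideanSpace.norm_eq]

lemma vnorm_nonneg (x : Fin n → ℝ) : 0 ≤ vnorm x := Real.sqrt_nonneg _

lemma vnorm_sq (x : Fin n → ℝ) : vnorm x ^ 2 = ∑ i, x i ^ 2 :=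
  Real.sq_sqrt (Finset.sum_nonneg fun _ _ => sq_nonneg _)

lemma vnorm_smul (c : ℝ) (x : Fin n → ℝ) : vnorm (c • x) = |c| * vnorm x := by
  simp only [vnorm_eq_norm, WithLp.toLp_smul, norm_smul, Real.norm_eq_abs]

lemma vnorm_add_of_sameRay {x y : Fin n → ℝ} (h : SameRay ℝ x y) :
    vnorm (x + y) = vnorm x + vnorm y := by
  simpa only [vnorm_eq_norm, WithLp.toLp_add, LinearEquiv.coe_coe,
    WithLp.coe_symm_linearEquiv] using
    (h.map (WithLp.linearEquiv 2 ℝ (Fin n → ℝ)).symm.toLinearMap).norm_add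

lemma dotProduct_self_eq_vnorm_sq (x : Fin n → ℝ) : x ⬝ᵥ x = vnorm x ^ 2 := by
  simp only [dotProduct, vnorm_sq, ← sq]

end vnorm

lemma sameRay_of_ne_zero_imp_eq_smul {M : Type*} [AddCommGroup M] [Module ℝ M] {c : ℝ}
    (hc : 0 ≤ c) {r ω : M} (h : r ≠ 0 → ω = c • r) : SameRay ℝ r ω := by
  rcases eq_or_ne r 0 with rfl | hr
  · exact SameRay.zero_left ω
  · exact h hr ▸ SameRay.sameRay_nonneg_smul_right r hc

lemma mulVec_add_vecMulVec_sub_sub {ι κ R : Type*} [Fintype κ] [CommRing R]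
    (A : Matrix ι κ R) (b w : ι → R) (v : κ → R) :
    (A + vecMulVec w v) *ᵥ v - (b - w) = (A *ᵥ v - b) + (v ⬝ᵥ v + 1) • w := by
  rw [add_mulVec, vecMulVec_mulVec, op_smul_eq_smul, add_smul, one_smul]
  abel

lemma sum_sq_vecMulVec_add_sum_sq {n m : ℕ} (w : Fin n → ℝ) (v : Fin m → ℝ) :
    (∑ i, ∑ j, vecMulVec w v i j ^ 2) + ∑ i, (-w i) ^ 2 = vnorm w ^ 2 * (vnorm v ^ 2 + 1) := by
  simp only [vecMulVec_apply, vnorm_sq, mul_pow, neg_sq, ← Finset.mul_sum, ← Finset.sum_mul]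
  ring

/-- The rank-one perturbation Δ̂ = (ρω/√(‖g‖²+1))[gᵀ −1] has Frobenius norm ρ and attains
the worst case ‖Ag−b‖ + ρ√(‖g‖²+1). -/
theorem stmt2 {n m : ℕ} (A : Matrix (Fin n) (Fin m) ℝ) (b : Fin n → ℝ) (g : Fin m → ℝ)
    (ρ : ℝ) (hρ : 0 ≤ ρ) (ω : Fin n → ℝ) (hω : vnorm ω = 1)
    (hωdef : A.mulVec g ≠ b → ω = (vnorm (A.mulVec g - b))⁻¹ • (A.mulVec g - b)) :
    let s : ℝ := ρ / Real.sqrt (vnorm g ^ 2 + 1)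
    let ΔA : Matrix (Fin n) (Fin m) ℝ := fun i j => s * ω i * g j
    let Δb : Fin n → ℝ := fun i => -(s * ω i)
    Real.sqrt ((∑ i, ∑ j, ΔA i j ^ 2) + ∑ i, Δb i ^ 2) = ρ ∧
    vnorm ((A + ΔA).mulVec g - (b + Δb)) =
      vnorm (A.mulVec g - b) + ρ * Real.sqrt (vnorm g ^ 2 + 1) := by
  intro s ΔA Δb
  set q := Real.sqrt (vnorm g ^ 2 + 1)
  have hq : 0 < q := Real.sqrt_pos.2 (by positivity)
  have hq_sq : q ^ 2 = vnorm g ^ 2 + 1 := Real.sq_sqrt (by positivity)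
  have hs : 0 ≤ s := div_nonneg hρ hq.le
  have hqs : q * s = ρ := mul_div_cancel₀ ρ hq.ne'
  have hΔb : b + Δb = b - s • ω := by
    rw [sub_eq_add_neg]; rfl
  have hΔA : ΔA = vecMulVec (s • ω) g := rfl
  constructor
  · have hfrob : (∑ i, ∑ j, ΔA i j ^ 2) + ∑ i, Δb i ^ 2 = vnorm (s • ω) ^ 2 * q ^ 2 :=
      hq_sq ▸ sum_sq_vecMulVec_add_sum_sq (s • ω) g
    rw [hfrob, vnorm_smul, hω, abs_of_nonneg hs, mul_one, ← mul_pow, mul_comm,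
      hqs, Real.sqrt_sq hρ]
  · have hray : SameRay ℝ (A *ᵥ g - b) ω :=
      sameRay_of_ne_zero_imp_eq_smul (inv_nonneg.2 (vnorm_nonneg _))
        fun h => hωdef (sub_ne_zero.1 h)
    have ht : q ^ 2 * s = ρ * q := by rw [sq, mul_assoc, hqs, mul_comm]
    have ht0 : 0 ≤ ρ * q := mul_nonneg hρ hq.le
    rw [hΔA, hΔb, mulVec_add_vecMulVec_sub_sub, dotProduct_self_eq_vnorm_sq, ← hq_sq, smul_smul,
      ht, vnorm_add_of_sameRay (hray.nonneg_smul_right ht0), vnorm_smul, hω, mul_one,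
      abs_of_nonneg ht0]
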